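/- Let M be a II₁ factor acting in standard position on H with tracial vector ξ, let P ⊆ M with P′ ∩ M ⊆ P, and suppose N is another II₁ factor on H containing P such that ξ is also a tracial vector for N, ⟨M, e_P⟩ = ⟨N, e_P⟩, and (u_n)_{n≥0} is a bounded homogeneous orthonormal basis of normalizers for P ⊆ M. If (v_n)_{n≥0} are normalizers in N(P ⊆ N) with v₀ = I and ‖v_n − u_n‖ < 1 for all n, then the closed subspaces satisfy cl(u_n P ξ) = cl(v_n P ξ) for each n, and consequently (v_n) is a bounded homogeneous orthonormal basis of normalizers for P ⊆ N; in particular N = (P ∪ {v_n : n ≥ 0})″. -/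

import Mathlib

noncomputable section

variable {H : Type*} [NormedAddCommGroup H] [InnerProductSpace ℂ H] [CompleteSpace H]

/-- The near inclusion `M ⊆_γ N`: every `x ∈ M` admits `y ∈ N` with `‖x - y‖ ≤ γ‖x‖`. -/
def NearIncl (M N : Set (H →L[ℂ] H)) (γ : ℝ) : Prop :=
  ∀ x ∈ M, ∃ y ∈ N, ‖x - y‖ ≤ γ * ‖x‖

/-- A von Neumann algebra is a factor if its center consists of scalars. -/
def IsFactor (M : VonNeumannAlgebra H) : Prop :=
  ∀ x ∈ M, (∀ y ∈ M, x * y = y * x) → ∃ c : ℂ, x = c • (1 : H →L[ℂ] H)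

/-- A von Neumann algebra is diffuse if it has no minimal projections. -/
def IsDiffuse (M : VonNeumannAlgebra H) : Prop :=
  ∀ p : H →L[ℂ] H, p ∈ M → IsSelfAdjoint p → IsIdempotentElem p → p ≠ 0 →
    ∃ q : H →L[ℂ] H, q ∈ M ∧ IsSelfAdjoint q ∧ IsIdempotentElem q ∧
      q * p = q ∧ p * q = q ∧ q ≠ 0 ∧ q ≠ p

/-- `τ` is a faithful tracial state on the von Neumann algebra `M`. -/
def IsTracialState (M : VonNeumannAlgebra H) (τ : (H →L[ℂ] H) →ₗ[ℂ] ℂ) : Prop :=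
  τ 1 = 1 ∧ (∀ x ∈ M, 0 ≤ (τ (star x * x)).re ∧ (τ (star x * x)).im = 0) ∧
    (∀ x ∈ M, ∀ y ∈ M, τ (x * y) = τ (y * x)) ∧
    (∀ x ∈ M, τ (star x * x) = 0 → x = 0)

/-- `M` is a II₁ factor with (unique) tracial state `τ`: an infinite-dimensional
(diffuse) finite factor. -/
def IsIIOneFactor (M : VonNeumannAlgebra H) (τ : (H →L[ℂ] H) →ₗ[ℂ] ℂ) : Prop :=
  IsFactor M ∧ IsDiffuse M ∧ IsTracialState M τ

/-- The orthogonal projection of `H` onto the closed subspace generated by `S`. -/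
def projCl (S : Set H) : H →L[ℂ] H :=
  letI K := (Submodule.span ℂ S).topologicalClosure
  haveI : CompleteSpace K := (Submodule.isClosed_topologicalClosure _).completeSpace_coe
  K.subtypeL ∘L K.orthogonalProjectionOnto

/-- The closed subspace `cl(w P ξ)` of `H`. -/
def subsp (P : VonNeumannAlgebra H) (ξ : H) (w : H →L[ℂ] H) : Submodule ℂ H :=
  (Submodule.span ℂ {y : H | ∃ p ∈ P, (w * p) ξ = y}).topologicalClosure

/-- `u` is a unitary normalizing `P`: `uPu* = P`. -/
def IsNormalizer (P : VonNeumannAlgebra H) (u : H →L[ℂ] H) : Prop :=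
  u ∈ unitary (H →L[ℂ] H) ∧ (∀ p ∈ P, u * p * star u ∈ P) ∧ ∀ p ∈ P, star u * p * u ∈ P

/-- `(u n)` is a bounded homogeneous orthonormal basis of normalizers for `P ⊆ A`,
formulated on the Hilbert space via the tracial vector `ξ`: `u 0 = 1`, each `u n` is a
normalizer of `P` lying in `A`, the subspaces `cl(u_i P ξ)` are pairwise orthogonal, and
their span is dense in `H`. -/
def IsBHONB (A P : VonNeumannAlgebra H) (ξ : H) (u : ℕ → (H →L[ℂ] H)) : Prop :=
  u 0 = 1 ∧ (∀ n, u n ∈ A ∧ IsNormalizer P (u n)) ∧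
    (∀ i j, i ≠ j → ∀ y ∈ subsp P ξ (u i), ∀ z ∈ subsp P ξ (u j),
      (inner ℂ y z : ℂ) = 0) ∧
    Dense (↑(⨆ n, subsp P ξ (u n)) : Set H)

/-!
Write `e` for the projection onto `L²(P) = cl(P ξ)` and `⟨M, e⟩ = (M ∪ {e})''`. The unitary
`w = v_n⋆ u_n` lies in `⟨M, e⟩ = ⟨N, e⟩`, normalizes `P` and satisfies `‖w - 1‖ < 1`; it suffices
to show `w e w⋆ = e`, since then `u_n e u_n⋆ = v_n e v_n⋆` and these are the projections onto
`cl(u_n P ξ)` and `cl(v_n P ξ)`.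

The projection `f = w e w⋆` lies in `⟨M, e⟩ ∩ P'`. Every `x ∈ ⟨M, e⟩ ∩ P'` commutes with `e`:
the key fact is `e ⟨M, e⟩ e = P e`, proved by showing that an operator `T = e T e` commuting with
all right multiplications `J q⋆ J` (`q ∈ P`) satisfies `‖y T ξ‖ ≤ ‖T‖ ‖y ξ‖` for `y ∈ P'`, so
`y ξ ↦ y T ξ` extends to an element of `P'' = P`. For `n ≠ 0` this makes the component of `x ξ`
in `cl(u_n P ξ)` a vector `b ξ` with `b ∈ M ∩ P' ⊆ P`, which is orthogonal to `cl(u_n P ξ)`;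
hence `x ξ ∈ L²(P)`, and likewise `x⋆ ξ`, so `x` leaves `L²(P)` invariant. Two commuting
projections `e` and `w e w⋆` with `‖w - 1‖ < 1` are equal.

Finally, `ξ` being tracial for `N`, an operator commuting with a ⋆-subalgebra `W ⊆ N` such that
`W ξ` is dense commutes with all of `N`; applied to the algebra generated by `P` and the `v_n`
this gives `(P ∪ {v_n})'' = N`.
-/

open scoped InnerProductSpace
open Filter Topology

section CStarRing

variable {A : Type*} [NormedRing A] [StarRing A] [CStarRing A]

theorem IsStarProjection.mul_one_sub_eq_zero_of_star_mul_eq {p f w : A}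
    (hp : IsStarProjection p) (hf : IsIdempotentElem f) (hc : Commute f p)
    (hwf : star w * f = p * star w) (hw : ‖w - 1‖ < 1) : p * (1 - f) = 0 := by
  set r := p * (1 - f)
  have hpr : p * r = r := by rw [← mul_assoc, hp.isIdempotentElem.eq]
  have hwr : p * star w * r = 0 := by
    rw [← hwf, mul_assoc, ← mul_assoc f, hc.eq, mul_assoc, mul_sub, mul_one, hf.eq, sub_self,
      mul_zero, mul_zero]
  have hr : r = p * (1 - star w) * r := by rw [mul_sub, mul_one, sub_mul, hwr, hpr, sub_zero]
  have hle : ‖r‖ ≤ ‖w - 1‖ * ‖r‖ :=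
    calc ‖r‖ = ‖p * (1 - star w) * r‖ := by rw [← hr]
      _ ≤ ‖p‖ * ‖1 - star w‖ * ‖r‖ := norm_mul₃_le
      _ ≤ 1 * ‖w - 1‖ * ‖r‖ := by
        gcongr
        · exact hp.norm_le p
        · rw [← norm_star, star_sub, star_one, star_star, norm_sub_rev]
      _ = ‖w - 1‖ * ‖r‖ := by rw [one_mul]
  have : ‖r‖ = 0 := by nlinarith [norm_nonneg r]
  exact norm_eq_zero.1 this

theorem IsStarProjection.conj_eq_self_of_commute {p w : A} (hp : IsStarProjection p)
    (hw : w ∈ unitary A) (hw1 : ‖w - 1‖ < 1) (hc : Commute (w * p * star w) p) :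
    w * p * star w = p := by
  set f := w * p * star w
  have hwf : star w * f = p * star w := by
    simp only [f, ← mul_assoc, Unitary.star_mul_self_of_mem hw, one_mul]
  have hf : IsIdempotentElem f := by
    change w * p * star w * (w * p * star w) = w * p * star w
    simp only [mul_assoc, ← mul_assoc (star w) w, Unitary.star_mul_self_of_mem hw, one_mul,
      ← mul_assoc p p, hp.isIdempotentElem.eq]
  have hc' : Commute (1 - f) (1 - p) := by
    simp only [Commute, SemiconjBy, mul_sub, sub_mul, one_mul, mul_one, hc.eq]
    abel
  have h1 := hp.mul_one_sub_eq_zero_of_star_mul_eq hf hc hwf hw1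
  have h2 := hp.one_sub.mul_one_sub_eq_zero_of_star_mul_eq hf.one_sub hc'
    (by rw [mul_sub, sub_mul, hwf, mul_one, one_mul]) hw1
  rw [sub_sub_cancel] at h2
  calc f = p * f := by rw [sub_mul, one_mul, sub_eq_zero] at h2; exact h2
    _ = p := by rw [mul_sub, mul_one, sub_eq_zero] at h1; exact h1.symm

end CStarRing

section HilbertSpace

variable {E : Type*} [NormedAddCommGroup E] [InnerProductSpace ℂ E]

namespace ContinuousLinearMap

variable [CompleteSpace E]

theorem norm_apply_eq_of_star_mul_self_eq {A B : E →L[ℂ] E} (h : star A * A = star B * B)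
    (x : E) : ‖A x‖ = ‖B x‖ := by
  rw [apply_norm_eq_sqrt_inner_adjoint_left, apply_norm_eq_sqrt_inner_adjoint_left]
  exact congrArg (fun C : E →L[ℂ] E => √(RCLike.re ⟪C x, x⟫_ℂ)) h

/-- `T` commutes with `|Y| = √(Y⋆Y)`, which has the same norms on vectors as `Y`. -/
theorem norm_apply_apply_le_of_commute_star_mul_self {Y T : E →L[ℂ] E}
    (h : Commute T (star Y * Y)) (x : E) :
    ‖Y (T x)‖ ≤ ‖T‖ * ‖Y x‖ := by
  set s := CFC.sqrt (star Y * Y)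
  have hs : star s * s = star Y * Y := by
    rw [(CFC.sqrt_nonneg _).isSelfAdjoint.star_eq,
      CFC.sqrt_mul_sqrt_self _ (star_mul_self_nonneg Y)]
  have hT : Commute T s := by
    simp only [s, CFC.sqrt_eq_cfc]; exact (h.symm.cfc_nnreal _).symm
  rw [norm_apply_eq_of_star_mul_self_eq hs.symm, norm_apply_eq_of_star_mul_self_eq hs.symm]
  calc ‖s (T x)‖ = ‖T (s x)‖ := by rw [← mul_apply_eq_comp, ← hT.eq]; rfl
    _ ≤ ‖T‖ * ‖s x‖ := T.le_opNorm _

end ContinuousLinearMap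

namespace Submodule

variable {U : Submodule ℂ E} [U.HasOrthogonalProjection]

theorem mem_orthogonal_topologicalClosure_span_iff {S : Set E} {z : E} :
    z ∈ (span ℂ S).topologicalClosureᗮ ↔ ∀ s ∈ S, ⟪s, z⟫_ℂ = 0 := by
  rw [orthogonal_closure]
  refine ⟨fun h s hs => h s (subset_span hs), fun h u hu => ?_⟩
  induction hu using span_induction with
  | mem s hs => exact h s hs
  | zero => exact inner_zero_left z
  | add a b _ _ ha hb => rw [inner_add_left, ha, hb, add_zero]
  | smul c a _ ha => rw [inner_smul_left, ha, mul_zero]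

theorem starProjection_mul_mul_starProjection {B : E →L[ℂ] E} (hB : ∀ x ∈ U, B x ∈ U) :
    U.starProjection * B * U.starProjection = B * U.starProjection := by
  ext x
  exact starProjection_eq_self_iff.2 (hB _ (starProjection_apply_mem U x))

variable [CompleteSpace E]

theorem commute_starProjection {B : E →L[ℂ] E} (hB : ∀ x ∈ U, B x ∈ U)
    (hB' : ∀ x ∈ U, star B x ∈ U) : Commute B U.starProjection := by
  have h := congrArg star (starProjection_mul_mul_starProjection hB')
  simp only [star_mul, star_star, (isSelfAdjoint_starProjection U).star_eq, ← mul_assoc] at h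
  exact (starProjection_mul_mul_starProjection hB).symm.trans h

end Submodule

variable [CompleteSpace E]

theorem star_apply_inner (B : E →L[ℂ] E) (x y : E) : ⟪star B x, y⟫_ℂ = ⟪x, B y⟫_ℂ := by
  rw [ContinuousLinearMap.star_eq_adjoint, ContinuousLinearMap.adjoint_inner_left]

theorem inner_star_apply (B : E →L[ℂ] E) (x y : E) : ⟪x, star B y⟫_ℂ = ⟪B x, y⟫_ℂ := by
  rw [ContinuousLinearMap.star_eq_adjoint, ContinuousLinearMap.adjoint_inner_right]

end HilbertSpace

def IsTracialVector (M : VonNeumannAlgebra H) (ξ : H) : Prop :=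
  ∀ x ∈ M, ∀ y ∈ M, ⟪(x * y) ξ, ξ⟫_ℂ = ⟪(y * x) ξ, ξ⟫_ℂ

/-- `r` is the operator `J q⋆ J` of the standard form, determined by its values on `M ξ`. -/
def IsRightMul (M : VonNeumannAlgebra H) (ξ : H) (q r : H →L[ℂ] H) : Prop :=
  ∀ m ∈ M, r (m ξ) = (m * q) ξ

namespace IsTracialVector

variable {M : VonNeumannAlgebra H} {ξ : H} (htr : IsTracialVector M ξ)
include htr

theorem norm_star_apply {x : H →L[ℂ] H} (hx : x ∈ M) : ‖star x ξ‖ = ‖x ξ‖ := by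
  rw [ContinuousLinearMap.apply_norm_eq_sqrt_inner_adjoint_left,
    ContinuousLinearMap.apply_norm_eq_sqrt_inner_adjoint_left,
    ← ContinuousLinearMap.star_eq_adjoint, ← ContinuousLinearMap.star_eq_adjoint, star_star]
  exact congrArg (fun z : ℂ => √(RCLike.re z)) (htr _ (star_mem hx) _ hx).symm

theorem inner_apply_mul_apply {a w x : H →L[ℂ] H} (ha : a ∈ M) (hw : w ∈ M) (hx : x ∈ M) :
    ⟪a ξ, w (x ξ)⟫_ℂ = ⟪a (star x ξ), w ξ⟫_ℂ := by
  calc ⟪a ξ, w (x ξ)⟫_ℂ = starRingEnd ℂ ⟪(star a * w * x) ξ, ξ⟫_ℂ := by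
        rw [inner_conj_symm, ← inner_star_apply]; rfl
    _ = starRingEnd ℂ ⟪(x * (star a * w)) ξ, ξ⟫_ℂ := by
        rw [htr _ (mul_mem (star_mem ha) hw) _ hx]
    _ = ⟪a (star x ξ), w ξ⟫_ℂ := by
        rw [inner_conj_symm]
        change ⟪ξ, x (star a (w ξ))⟫_ℂ = _
        rw [← star_apply_inner, inner_star_apply]

theorem exists_tendsto_star_apply {x : ℕ → H →L[ℂ] H} (hx : ∀ k, x k ∈ M) {η : H}
    (h : Tendsto (fun k => x k ξ) atTop (𝓝 η)) :
    ∃ β, Tendsto (fun k => star (x k) ξ) atTop (𝓝 β) := by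
  refine cauchySeq_tendsto_of_complete (Metric.cauchySeq_iff.2 fun ε hε => ?_)
  obtain ⟨N, hN⟩ := Metric.cauchySeq_iff.1 h.cauchySeq ε hε
  refine ⟨N, fun i hi j hj => ?_⟩
  have := htr.norm_star_apply (sub_mem (hx i) (hx j))
  simpa only [dist_eq_norm, ← sub_apply, ← star_sub, this] using hN i hi j hj

theorem inner_apply_eq_of_tendsto {x : ℕ → H →L[ℂ] H} (hx : ∀ k, x k ∈ M) {η β : H}
    (hη : Tendsto (fun k => x k ξ) atTop (𝓝 η))
    (hβ : Tendsto (fun k => star (x k) ξ) atTop (𝓝 β)) {a w : H →L[ℂ] H} (ha : a ∈ M)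
    (hw : w ∈ M) : ⟪a ξ, w η⟫_ℂ = ⟪a β, w ξ⟫_ℂ := by
  have h1 : Tendsto (fun k => ⟪a ξ, w (x k ξ)⟫_ℂ) atTop (𝓝 ⟪a ξ, w η⟫_ℂ) :=
    tendsto_const_nhds.inner ((w.continuous.tendsto η).comp hη)
  have h2 : Tendsto (fun k => ⟪a (star (x k) ξ), w ξ⟫_ℂ) atTop (𝓝 ⟪a β, w ξ⟫_ℂ) :=
    ((a.continuous.tendsto β).comp hβ).inner tendsto_const_nhds
  simp_rw [htr.inner_apply_mul_apply ha hw (hx _)] at h1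
  exact tendsto_nhds_unique h1 h2

variable (hcyc : Dense {y : H | ∃ x ∈ M, x ξ = y})
include hcyc

theorem exists_isRightMul {q : H →L[ℂ] H} (hq : q ∈ M) : ∃ r, IsRightMul M ξ q r := by
  let L : Subalgebra.toSubmodule M.toSubalgebra →ₗ[ℂ] H :=
    (ContinuousLinearMap.apply ℂ H ξ).toLinearMap ∘ₗ (Subalgebra.toSubmodule M.toSubalgebra).subtype
  let R : Subalgebra.toSubmodule M.toSubalgebra →ₗ[ℂ] H :=
    (ContinuousLinearMap.apply ℂ H ξ).toLinearMap ∘ₗ (LinearMap.mulRight ℂ q) ∘ₗ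
      (Subalgebra.toSubmodule M.toSubalgebra).subtype
  have hL : DenseRange L := hcyc.mono (by rintro _ ⟨m, hm, rfl⟩; exact ⟨⟨m, hm⟩, rfl⟩)
  have hR : ∀ m, ‖R m‖ ≤ ‖q‖ * ‖L m‖ := by
    rintro ⟨m, hm⟩
    calc ‖(m * q) ξ‖ = ‖star q (star m ξ)‖ := by
          rw [← htr.norm_star_apply (mul_mem hm hq), star_mul]; rfl
      _ ≤ ‖star q‖ * ‖star m ξ‖ := (star q).le_opNorm _
      _ = ‖q‖ * ‖m ξ‖ := by rw [norm_star, htr.norm_star_apply hm]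
  exact ⟨R.extendOfNorm L, fun m hm => LinearMap.extendOfNorm_eq hL ⟨_, hR⟩ ⟨m, hm⟩⟩

end IsTracialVector

namespace IsRightMul

variable {M : VonNeumannAlgebra H} {ξ : H} {q r : H →L[ℂ] H}

theorem apply_self (hr : IsRightMul M ξ q r) : r ξ = q ξ := by
  simpa using hr 1 (one_mem M)

theorem commute (hcyc : Dense {y : H | ∃ x ∈ M, x ξ = y}) (hr : IsRightMul M ξ q r)
    {m : H →L[ℂ] H} (hm : m ∈ M) : Commute m r := by
  refine ContinuousLinearMap.ext_on (hcyc.mono Submodule.subset_span) ?_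
  rintro _ ⟨m', hm', rfl⟩
  change m (r (m' ξ)) = r ((m * m') ξ)
  rw [hr m' hm', hr _ (mul_mem hm hm'), mul_assoc]
  rfl

theorem star_apply (htr : IsTracialVector M ξ) (hcyc : Dense {y : H | ∃ x ∈ M, x ξ = y})
    (hq : q ∈ M) (hr : IsRightMul M ξ q r) {m : H →L[ℂ] H} (hm : m ∈ M) :
    star r (m ξ) = (m * star q) ξ := by
  refine hcyc.eq_of_inner_left ℂ ?_
  rintro _ ⟨m', hm', rfl⟩
  rw [star_apply_inner, hr m' hm']
  exact htr.inner_apply_mul_apply hm hm' hq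

end IsRightMul

theorem VonNeumannAlgebra.eq_of_apply_eq {M : VonNeumannAlgebra H} {ξ : H}
    (hcyc' : Dense {y : H | ∃ x ∈ M.commutant, x ξ = y}) {m₁ m₂ : H →L[ℂ] H} (h₁ : m₁ ∈ M)
    (h₂ : m₂ ∈ M) (h : m₁ ξ = m₂ ξ) : m₁ = m₂ := by
  refine ContinuousLinearMap.ext_on (hcyc'.mono Submodule.subset_span) ?_
  rintro _ ⟨x, hx, rfl⟩
  change (m₁ * x) ξ = (m₂ * x) ξ
  rw [mem_commutant_iff.1 hx _ h₁, mem_commutant_iff.1 hx _ h₂]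
  exact congrArg x h

theorem VonNeumannAlgebra.apply_apply_of_mem_commutant {P : VonNeumannAlgebra H}
    {y p : H →L[ℂ] H} (hy : y ∈ P.commutant) (hp : p ∈ P) (z : H) : y (p z) = p (y z) :=
  congrArg (fun B : H →L[ℂ] H => B z) (mem_commutant_iff.1 hy p hp).symm

/-- `L²(P)`, as a subspace of `H = L²(M)`. -/
def jonesSubspace (P : VonNeumannAlgebra H) (ξ : H) : Submodule ℂ H :=
  (Submodule.span ℂ {y | ∃ p ∈ P, p ξ = y}).topologicalClosure

instance (P : VonNeumannAlgebra H) (ξ : H) : (jonesSubspace P ξ).HasOrthogonalProjection := by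
  unfold jonesSubspace; infer_instance

def jonesProj (P : VonNeumannAlgebra H) (ξ : H) : H →L[ℂ] H :=
  (jonesSubspace P ξ).starProjection

section JonesProjection

variable {P : VonNeumannAlgebra H} {ξ : H}

theorem projCl_eq_jonesProj : projCl {y | ∃ p ∈ P, p ξ = y} = jonesProj P ξ := rfl

theorem isStarProjection_jonesProj : IsStarProjection (jonesProj P ξ) :=
  isStarProjection_starProjection

theorem isClosed_jonesSubspace : IsClosed (jonesSubspace P ξ : Set H) :=
  Submodule.isClosed_topologicalClosure _

theorem jonesProj_apply_mem (z : H) : jonesProj P ξ z ∈ jonesSubspace P ξ :=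
  Submodule.starProjection_apply_mem _ z

theorem jonesProj_apply_of_mem {z : H} (hz : z ∈ jonesSubspace P ξ) : jonesProj P ξ z = z :=
  Submodule.starProjection_eq_self_iff.2 hz

theorem apply_mem_jonesSubspace {p : H →L[ℂ] H} (hp : p ∈ P) : p ξ ∈ jonesSubspace P ξ :=
  Submodule.le_topologicalClosure _ (Submodule.subset_span ⟨p, hp, rfl⟩)

theorem jonesProj_apply_apply {p : H →L[ℂ] H} (hp : p ∈ P) : jonesProj P ξ (p ξ) = p ξ :=
  jonesProj_apply_of_mem (apply_mem_jonesSubspace hp)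

theorem jonesProj_apply_self : jonesProj P ξ ξ = ξ := by
  simpa using jonesProj_apply_apply (P := P) (ξ := ξ) (one_mem P)

theorem inner_jonesProj_left (x y : H) :
    ⟪jonesProj P ξ x, y⟫_ℂ = ⟪x, jonesProj P ξ y⟫_ℂ :=
  Submodule.inner_starProjection_left_eq_right _ x y

theorem jonesProj_mul_self : jonesProj P ξ * jonesProj P ξ = jonesProj P ξ :=
  isStarProjection_jonesProj.isIdempotentElem.eq

theorem apply_mem_jonesSubspace_of_forall {B : H →L[ℂ] H}
    (hB : ∀ p ∈ P, B (p ξ) ∈ jonesSubspace P ξ) {z : H} (hz : z ∈ jonesSubspace P ξ) :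
    B z ∈ jonesSubspace P ξ := by
  refine Submodule.topologicalClosure_minimal _ (t := (jonesSubspace P ξ).comap (B : H →ₗ[ℂ] H))
    ?_ (isClosed_jonesSubspace.preimage B.continuous) hz
  rw [Submodule.span_le]
  rintro _ ⟨p, hp, rfl⟩
  exact hB p hp

theorem apply_mem_jonesSubspace_of_mem {p : H →L[ℂ] H} (hp : p ∈ P) {z : H}
    (hz : z ∈ jonesSubspace P ξ) : p z ∈ jonesSubspace P ξ :=
  apply_mem_jonesSubspace_of_forall (fun _ hq => apply_mem_jonesSubspace (mul_mem hp hq)) hz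

theorem commute_jonesProj {p : H →L[ℂ] H} (hp : p ∈ P) : Commute p (jonesProj P ξ) :=
  Submodule.commute_starProjection (fun _ => apply_mem_jonesSubspace_of_mem hp)
    (fun _ => apply_mem_jonesSubspace_of_mem (star_mem hp))

theorem apply_jonesProj_apply {p : H →L[ℂ] H} (hp : p ∈ P) (z : H) :
    p (jonesProj P ξ z) = jonesProj P ξ (p z) :=
  congrArg (fun B : H →L[ℂ] H => B z) (commute_jonesProj hp).eq

theorem commute_jonesProj_of_mem_commutant {x : H →L[ℂ] H} (hx : x ∈ P.commutant)
    (h₁ : x ξ ∈ jonesSubspace P ξ) (h₂ : star x ξ ∈ jonesSubspace P ξ) :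
    Commute x (jonesProj P ξ) := by
  have key : ∀ y ∈ P.commutant, y ξ ∈ jonesSubspace P ξ →
      ∀ z ∈ jonesSubspace P ξ, y z ∈ jonesSubspace P ξ := fun y hy hyξ _ =>
    apply_mem_jonesSubspace_of_forall fun p hp => by
      change (y * p) ξ ∈ _
      rw [← VonNeumannAlgebra.mem_commutant_iff.1 hy p hp]
      exact apply_mem_jonesSubspace_of_mem hp hyξ
  exact Submodule.commute_starProjection (key x hx h₁) (key _ (star_mem hx) h₂)

theorem exists_tendsto_of_mem_jonesSubspace {η : H} (hη : η ∈ jonesSubspace P ξ) :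
    ∃ g : ℕ → H →L[ℂ] H, (∀ k, g k ∈ P) ∧ Tendsto (fun k => g k ξ) atTop (𝓝 η) := by
  have hspan : ∀ y ∈ Submodule.span ℂ {y | ∃ p ∈ P, p ξ = y}, ∃ p ∈ P, p ξ = y := by
    intro y hy
    induction hy using Submodule.span_induction with
    | mem y hy => exact hy
    | zero => exact ⟨0, zero_mem P, rfl⟩
    | add _ _ _ _ h₁ h₂ =>
      obtain ⟨p, hp, rfl⟩ := h₁
      obtain ⟨q, hq, rfl⟩ := h₂
      exact ⟨p + q, add_mem hp hq, rfl⟩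
    | smul c _ _ h =>
      obtain ⟨p, hp, rfl⟩ := h
      exact ⟨c • p, P.toStarSubalgebra.smul_mem hp c, rfl⟩
  rw [jonesSubspace, ← SetLike.mem_coe, Submodule.topologicalClosure_coe,
    mem_closure_iff_seq_limit] at hη
  obtain ⟨y, hy, hlim⟩ := hη
  choose g hg hgy using fun k => hspan _ (hy k)
  exact ⟨g, hg, by simpa only [hgy] using hlim⟩

theorem eq_of_forall_inner_apply_eq {α β : H} (hα : α ∈ jonesSubspace P ξ)
    (hβ : β ∈ jonesSubspace P ξ) (h : ∀ p ∈ P, ⟪α, p ξ⟫_ℂ = ⟪β, p ξ⟫_ℂ) : α = β := by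
  have hperp : α - β ∈ (jonesSubspace P ξ)ᗮ := by
    refine Submodule.mem_orthogonal_topologicalClosure_span_iff.2 ?_
    rintro _ ⟨p, hp, rfl⟩
    rw [← inner_conj_symm, inner_sub_left, h p hp, sub_self, map_zero]
  exact sub_eq_zero.1 (inner_self_eq_zero.1 (hperp _ (sub_mem hα hβ)))

theorem jonesProj_ext {A B : H →L[ℂ] H} (hA : A * jonesProj P ξ = A)
    (hB : B * jonesProj P ξ = B) (h : ∀ p ∈ P, A (p ξ) = B (p ξ)) : A = B := by
  have hK : Set.EqOn A B (jonesSubspace P ξ) := by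
    rw [jonesSubspace, Submodule.topologicalClosure_coe]
    exact ContinuousLinearMap.eqOn_closure_span (by rintro _ ⟨p, hp, rfl⟩; exact h p hp)
  rw [← hA, ← hB]
  ext z
  exact hK (jonesProj_apply_mem z)

theorem IsNormalizer.commute_conj_jonesProj {u p : H →L[ℂ] H} (hu : IsNormalizer P u)
    (hp : p ∈ P) : Commute p (u * jonesProj P ξ * star u) := by
  have hpu : p * u = u * (star u * p * u) := by
    rw [← mul_assoc, ← mul_assoc, Unitary.mul_star_self_of_mem hu.1, one_mul]
  have hup : star u * p * u * star u = star u * p := by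
    rw [mul_assoc, Unitary.mul_star_self_of_mem hu.1, mul_one]
  calc p * (u * jonesProj P ξ * star u) = u * (star u * p * u * jonesProj P ξ) * star u := by
        rw [← mul_assoc, ← mul_assoc, hpu]; simp only [mul_assoc]
    _ = u * jonesProj P ξ * (star u * p * u * star u) := by
        rw [(commute_jonesProj (hu.2.2 p hp)).eq]; simp only [mul_assoc]
    _ = u * jonesProj P ξ * star u * p := by rw [hup]; simp only [mul_assoc]

end JonesProjection

def basicConstruction (M P : VonNeumannAlgebra H) (ξ : H) : StarSubalgebra ℂ (H →L[ℂ] H) :=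
  StarSubalgebra.centralizer ℂ
    (StarSubalgebra.centralizer ℂ ((M : Set (H →L[ℂ] H)) ∪ {jonesProj P ξ}))

section BasicConstruction

variable {M P : VonNeumannAlgebra H} {ξ : H}

theorem coe_basicConstruction : (basicConstruction M P ξ : Set (H →L[ℂ] H)) =
    Set.centralizer (Set.centralizer
      ((M : Set (H →L[ℂ] H)) ∪ {projCl {y : H | ∃ p ∈ P, p ξ = y}})) := by
  rw [basicConstruction, StarSubalgebra.coe_centralizer_centralizer, Set.union_star,
    StarMemClass.star_coe_eq, Set.star_singleton, isStarProjection_jonesProj.isSelfAdjoint.star_eq,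
    Set.union_self, projCl_eq_jonesProj]

theorem mem_basicConstruction_of_mem {m : H →L[ℂ] H} (hm : m ∈ M) :
    m ∈ basicConstruction M P ξ := by
  rw [← SetLike.mem_coe, coe_basicConstruction]
  exact Set.subset_centralizer_centralizer (Or.inl hm)

theorem jonesProj_mem_basicConstruction : jonesProj P ξ ∈ basicConstruction M P ξ := by
  rw [← SetLike.mem_coe, coe_basicConstruction]
  exact Set.subset_centralizer_centralizer (Or.inr rfl)

theorem IsRightMul.commute_of_mem_basicConstruction (htr : IsTracialVector M ξ)
    (hcyc : Dense {y : H | ∃ x ∈ M, x ξ = y}) (hPM : P ≤ M) {q r x : H →L[ℂ] H} (hq : q ∈ P)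
    (hr : IsRightMul M ξ q r) (hx : x ∈ basicConstruction M P ξ) : Commute x r := by
  have hre : Commute r (jonesProj P ξ) := by
    refine Submodule.commute_starProjection
      (fun _ => apply_mem_jonesSubspace_of_forall fun p hp => ?_)
      (fun _ => apply_mem_jonesSubspace_of_forall fun p hp => ?_)
    · rw [hr p (hPM hp)]
      exact apply_mem_jonesSubspace (mul_mem hp hq)
    · rw [hr.star_apply htr hcyc (hPM hq) (hPM hp)]
      exact apply_mem_jonesSubspace (mul_mem hp (star_mem hq))
  have hrc : r ∈ Set.centralizer ((M : Set (H →L[ℂ] H)) ∪ {jonesProj P ξ}) := by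
    rintro g (hg | rfl)
    · exact (hr.commute hcyc hg).eq
    · exact hre.eq.symm
  rw [← SetLike.mem_coe, coe_basicConstruction, projCl_eq_jonesProj] at hx
  exact (hx r hrc).symm

end BasicConstruction

section Factorization

variable {M P : VonNeumannAlgebra H} {ξ : H} (htr : IsTracialVector M ξ)
  (hcyc : Dense {y : H | ∃ x ∈ M, x ξ = y}) (hPM : P ≤ M)
include htr hcyc hPM

theorem inner_apply_apply_eq_of_tendsto {T : H →L[ℂ] H} (hTA : T ∈ basicConstruction M P ξ)
    {g : ℕ → H →L[ℂ] H} (hg : ∀ k, g k ∈ P) {η β : H}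
    (hη : Tendsto (fun k => g k ξ) atTop (𝓝 η))
    (hβ : Tendsto (fun k => star (g k) ξ) atTop (𝓝 β)) {p q : H →L[ℂ] H} (hp : p ∈ P)
    (hq : q ∈ P) : ⟪T (q η), p ξ⟫_ℂ = ⟪T (q ξ), p β⟫_ℂ := by
  have step : ∀ k, ⟪T (q (g k ξ)), p ξ⟫_ℂ = ⟪T (q ξ), p (star (g k) ξ)⟫_ℂ := by
    intro k
    obtain ⟨r, hr⟩ := htr.exists_isRightMul hcyc (hPM (hg k))
    have hTr := (hr.commute_of_mem_basicConstruction htr hcyc hPM (hg k) hTA).eq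
    calc ⟪T (q (g k ξ)), p ξ⟫_ℂ = ⟪(T * r) (q ξ), p ξ⟫_ℂ := by
          change _ = ⟪T (r (q ξ)), p ξ⟫_ℂ
          rw [hr q (hPM hq)]; rfl
      _ = ⟪T (q ξ), star r (p ξ)⟫_ℂ := by rw [hTr, inner_star_apply]; rfl
      _ = ⟪T (q ξ), p (star (g k) ξ)⟫_ℂ := by
          rw [hr.star_apply htr hcyc (hPM (hg k)) (hPM hp)]; rfl
  have h₁ : Tendsto (fun k => ⟪T (q ξ), p (star (g k) ξ)⟫_ℂ) atTop (𝓝 ⟪T (q η), p ξ⟫_ℂ) := by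
    simp_rw [← step]
    exact (((T.continuous.comp q.continuous).tendsto η).comp hη).inner tendsto_const_nhds
  exact tendsto_nhds_unique h₁
    (tendsto_const_nhds.inner ((p.continuous.tendsto β).comp hβ))

omit hcyc in
theorem eq_jonesProj_star_apply_of_tendsto {y : H →L[ℂ] H} (hy : y ∈ P.commutant)
    {g : ℕ → H →L[ℂ] H} (hg : ∀ k, g k ∈ P) {β : H}
    (hη : Tendsto (fun k => g k ξ) atTop (𝓝 (jonesProj P ξ (y ξ))))
    (hβ : Tendsto (fun k => star (g k) ξ) atTop (𝓝 β)) : β = jonesProj P ξ (star y ξ) := by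
  have hβK : β ∈ jonesSubspace P ξ := isClosed_jonesSubspace.mem_of_tendsto hβ
    (Eventually.of_forall fun k => apply_mem_jonesSubspace (star_mem (hg k)))
  refine eq_of_forall_inner_apply_eq hβK (jonesProj_apply_mem _) fun p hp => ?_
  have h := htr.inner_apply_eq_of_tendsto (fun k => hPM (hg k)) hη hβ (one_mem M) (hPM hp)
  simp only [one_apply_eq_self] at h
  calc ⟪β, p ξ⟫_ℂ = ⟪ξ, jonesProj P ξ (p (y ξ))⟫_ℂ := by rw [← h, apply_jonesProj_apply hp]
    _ = ⟪star y ξ, p ξ⟫_ℂ := by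
        rw [← inner_jonesProj_left, jonesProj_apply_self,
          ← VonNeumannAlgebra.apply_apply_of_mem_commutant hy hp, star_apply_inner]
    _ = ⟪jonesProj P ξ (star y ξ), p ξ⟫_ℂ := by
        rw [inner_jonesProj_left, jonesProj_apply_apply hp]

/-- The corner `e y e` of `y ∈ P'` is approximated on `P ξ` by right multiplications by
elements of `P`, all of which commute with `T`. -/
theorem commute_jonesProj_mul_mul_jonesProj {T : H →L[ℂ] H}
    (hTA : T ∈ basicConstruction M P ξ) (hT₁ : jonesProj P ξ * T = T)
    (hT₂ : T * jonesProj P ξ = T) {y : H →L[ℂ] H} (hy : y ∈ P.commutant) :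
    Commute T (jonesProj P ξ * y * jonesProj P ξ) := by
  have hTK : ∀ z, T z ∈ jonesSubspace P ξ := fun z => hT₁ ▸ jonesProj_apply_mem (T z)
  refine jonesProj_ext (P := P) (ξ := ξ) (by simp only [mul_assoc, jonesProj_mul_self])
    (by rw [mul_assoc _ T, hT₂]) fun q hq => ?_
  obtain ⟨g, hg, hη⟩ := exists_tendsto_of_mem_jonesSubspace (jonesProj_apply_mem (P := P) (y ξ))
  obtain ⟨β, hβ⟩ := htr.exists_tendsto_star_apply (fun k => hPM (hg k)) hη
  have hβe := eq_jonesProj_star_apply_of_tendsto htr hPM hy hg hη hβ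
  change T (jonesProj P ξ (y (jonesProj P ξ (q ξ)))) =
    jonesProj P ξ (y (jonesProj P ξ (T (q ξ))))
  rw [jonesProj_apply_apply hq, VonNeumannAlgebra.apply_apply_of_mem_commutant hy hq,
    ← apply_jonesProj_apply hq, jonesProj_apply_of_mem (hTK _)]
  refine eq_of_forall_inner_apply_eq (hTK _) (jonesProj_apply_mem _) fun p hp => ?_
  calc ⟪T (q (jonesProj P ξ (y ξ))), p ξ⟫_ℂ = ⟪T (q ξ), p (jonesProj P ξ (star y ξ))⟫_ℂ := by
        rw [inner_apply_apply_eq_of_tendsto htr hcyc hPM hTA hg hη hβ hp hq, hβe]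
    _ = ⟪T (q ξ), star y (p ξ)⟫_ℂ := by
        rw [apply_jonesProj_apply hp, ← inner_jonesProj_left, jonesProj_apply_of_mem (hTK _),
          VonNeumannAlgebra.apply_apply_of_mem_commutant (star_mem hy) hp]
    _ = ⟪jonesProj P ξ (y (T (q ξ))), p ξ⟫_ℂ := by
        rw [inner_star_apply, inner_jonesProj_left, jonesProj_apply_apply hp]

theorem norm_apply_apply_le_of_mem_basicConstruction {T : H →L[ℂ] H}
    (hTA : T ∈ basicConstruction M P ξ) (hT₁ : jonesProj P ξ * T = T)
    (hT₂ : T * jonesProj P ξ = T) {y : H →L[ℂ] H} (hy : y ∈ P.commutant) : ‖y (T ξ)‖ ≤ ‖T‖ * ‖y ξ‖ := by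
  have hY : star (y * jonesProj P ξ) * (y * jonesProj P ξ) =
      jonesProj P ξ * (star y * y) * jonesProj P ξ := by
    rw [star_mul, isStarProjection_jonesProj.isSelfAdjoint.star_eq]
    simp only [mul_assoc]
  have h := ContinuousLinearMap.norm_apply_apply_le_of_commute_star_mul_self
    (Y := y * jonesProj P ξ)
    (hY ▸ commute_jonesProj_mul_mul_jonesProj htr hcyc hPM hTA hT₁ hT₂
      (mul_mem (star_mem hy) hy)) ξ
  have hTξ : jonesProj P ξ (T ξ) = T ξ := congrArg (fun B : H →L[ℂ] H => B ξ) hT₁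
  simpa only [mul_apply_eq_comp, hTξ, jonesProj_apply_self] using h

theorem exists_mem_mul_jonesProj_eq (hcyc' : Dense {y : H | ∃ x ∈ M.commutant, x ξ = y})
    {T : H →L[ℂ] H} (hTA : T ∈ basicConstruction M P ξ) (hT₁ : jonesProj P ξ * T = T)
    (hT₂ : T * jonesProj P ξ = T) : ∃ a ∈ P, a * jonesProj P ξ = T := by
  let L : Subalgebra.toSubmodule P.commutant.toSubalgebra →ₗ[ℂ] H :=
    (ContinuousLinearMap.apply ℂ H ξ).toLinearMap ∘ₗ
      (Subalgebra.toSubmodule P.commutant.toSubalgebra).subtype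
  let R : Subalgebra.toSubmodule P.commutant.toSubalgebra →ₗ[ℂ] H :=
    (ContinuousLinearMap.apply ℂ H (T ξ)).toLinearMap ∘ₗ
      (Subalgebra.toSubmodule P.commutant.toSubalgebra).subtype
  have hL : DenseRange L := hcyc'.mono <| by
    rintro _ ⟨m, hm, rfl⟩
    exact ⟨⟨m, VonNeumannAlgebra.mem_commutant_iff.2 fun p hp =>
      VonNeumannAlgebra.mem_commutant_iff.1 hm p (hPM hp)⟩, rfl⟩
  have hR : ∀ y, ‖R y‖ ≤ ‖T‖ * ‖L y‖ := fun y =>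
    norm_apply_apply_le_of_mem_basicConstruction htr hcyc hPM hTA hT₁ hT₂ y.2
  set a := R.extendOfNorm L
  have ha : ∀ y ∈ P.commutant, a (y ξ) = y (T ξ) := fun y hy =>
    LinearMap.extendOfNorm_eq hL ⟨_, hR⟩ ⟨y, hy⟩
  have haP : a ∈ P := by
    rw [← P.commutant_commutant, VonNeumannAlgebra.mem_commutant_iff]
    intro y hy
    refine ContinuousLinearMap.ext_on (hL.mono Submodule.subset_span) ?_
    rintro _ ⟨⟨g, hg⟩, rfl⟩
    change y (a (g ξ)) = a ((y * g) ξ)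
    rw [ha g hg, ha _ (mul_mem hy hg)]
    rfl
  refine ⟨a, haP, jonesProj_ext (by rw [mul_assoc, jonesProj_mul_self]) hT₂ fun p hp => ?_⟩
  obtain ⟨r, hr⟩ := htr.exists_isRightMul hcyc (hPM hp)
  have hrP : r ∈ P.commutant :=
    VonNeumannAlgebra.mem_commutant_iff.2 fun q hq => (hr.commute hcyc (hPM hq)).eq
  change a (jonesProj P ξ (p ξ)) = T (p ξ)
  rw [jonesProj_apply_apply hp, ← hr.apply_self, ha r hrP]
  exact congrArg (fun B : H →L[ℂ] H => B ξ)
    (hr.commute_of_mem_basicConstruction htr hcyc hPM hp hTA).eq.symm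

theorem exists_jonesProj_mul_mul_jonesProj_eq
    (hcyc' : Dense {y : H | ∃ x ∈ M.commutant, x ξ = y}) {x : H →L[ℂ] H}
    (hx : x ∈ basicConstruction M P ξ) :
    ∃ a ∈ P, jonesProj P ξ * x * jonesProj P ξ = a * jonesProj P ξ := by
  obtain ⟨a, ha, h⟩ := exists_mem_mul_jonesProj_eq htr hcyc hPM hcyc'
    (mul_mem (mul_mem jonesProj_mem_basicConstruction hx) jonesProj_mem_basicConstruction)
    (by rw [← mul_assoc, ← mul_assoc, jonesProj_mul_self])
    (by rw [mul_assoc, jonesProj_mul_self])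
  exact ⟨a, ha, h.symm⟩

end Factorization

namespace IsNormalizer

variable {P : VonNeumannAlgebra H} {u v : H →L[ℂ] H}

theorem star (hu : IsNormalizer P u) : IsNormalizer P (star u) :=
  ⟨Unitary.star_mem hu.1, by simpa only [star_star] using hu.2.2,
    by simpa only [star_star] using hu.2.1⟩

theorem mul (hu : IsNormalizer P u) (hv : IsNormalizer P v) : IsNormalizer P (u * v) := by
  refine ⟨mul_mem hu.1 hv.1, fun p hp => ?_, fun p hp => ?_⟩
  · simpa only [star_mul, mul_assoc] using hu.2.1 _ (hv.2.1 p hp)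
  · simpa only [star_mul, mul_assoc] using hv.2.2 _ (hu.2.2 p hp)

end IsNormalizer

section Subspaces

variable {P : VonNeumannAlgebra H} {ξ : H}

theorem subsp_one : subsp P ξ 1 = jonesSubspace P ξ := by
  simp only [subsp, jonesSubspace, one_mul]

theorem apply_mem_subsp (w : H →L[ℂ] H) {z : H} (hz : z ∈ jonesSubspace P ξ) :
    w z ∈ subsp P ξ w := by
  refine Submodule.topologicalClosure_minimal _ (t := (subsp P ξ w).comap (w : H →ₗ[ℂ] H)) ?_
    ((Submodule.isClosed_topologicalClosure _).preimage w.continuous) hz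
  rw [Submodule.span_le]
  rintro _ ⟨p, hp, rfl⟩
  exact Submodule.le_topologicalClosure _ (Submodule.subset_span ⟨p, hp, rfl⟩)

theorem mem_orthogonal_subsp_iff {w : H →L[ℂ] H} {z : H} :
    z ∈ (subsp P ξ w)ᗮ ↔ ∀ p ∈ P, ⟪(w * p) ξ, z⟫_ℂ = 0 := by
  rw [subsp, Submodule.mem_orthogonal_topologicalClosure_span_iff]
  exact ⟨fun h p hp => h _ ⟨p, hp, rfl⟩, by rintro h _ ⟨p, hp, rfl⟩; exact h p hp⟩

theorem conj_jonesProj_apply_mul_apply {u p : H →L[ℂ] H} (hu : u ∈ unitary (H →L[ℂ] H))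
    (hp : p ∈ P) : (u * jonesProj P ξ * star u) ((u * p) ξ) = (u * p) ξ := by
  change u (jonesProj P ξ ((star u * u) (p ξ))) = _
  rw [Unitary.star_mul_self_of_mem hu, one_apply_eq_self, jonesProj_apply_apply hp]
  rfl

theorem subsp_le_of_conj_jonesProj_eq {u v : H →L[ℂ] H} (hu : u ∈ unitary (H →L[ℂ] H))
    (h : u * jonesProj P ξ * star u = v * jonesProj P ξ * star v) :
    subsp P ξ u ≤ subsp P ξ v := by
  refine Submodule.topologicalClosure_minimal _ (Submodule.span_le.2 ?_)
    (Submodule.isClosed_topologicalClosure _)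
  rintro _ ⟨p, hp, rfl⟩
  rw [SetLike.mem_coe, ← conj_jonesProj_apply_mul_apply hu hp, h]
  exact apply_mem_subsp v (jonesProj_apply_mem _)

theorem subsp_eq_of_conj_jonesProj_eq {u v : H →L[ℂ] H} (hu : u ∈ unitary (H →L[ℂ] H))
    (hv : v ∈ unitary (H →L[ℂ] H))
    (h : u * jonesProj P ξ * star u = v * jonesProj P ξ * star v) :
    subsp P ξ u = subsp P ξ v :=
  le_antisymm (subsp_le_of_conj_jonesProj_eq hu h) (subsp_le_of_conj_jonesProj_eq hv h.symm)

end Subspaces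

section OrthonormalBasis

variable {M P : VonNeumannAlgebra H} {ξ : H} (htr : IsTracialVector M ξ)
  (hcyc : Dense {y : H | ∃ x ∈ M, x ξ = y}) (hcyc' : Dense {y : H | ∃ x ∈ M.commutant, x ξ = y})
  (hPM : P ≤ M) (hrc : ∀ x ∈ M, (∀ p ∈ P, x * p = p * x) → x ∈ P) {u : ℕ → H →L[ℂ] H}
  (hu : IsBHONB M P ξ u)
include htr hcyc hcyc' hPM hrc hu

/-- Compressing `u m⋆ x` to `L²(P)` gives `a e` with `a ∈ P`; then `b = u m a` lies in
`M ∩ P' ⊆ P`, so `b ξ = (u m e u m⋆) (x ξ)` lies in `L²(P)`, which is orthogonal to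
`cl(u m P ξ)`. -/
theorem apply_mem_orthogonal_subsp {x : H →L[ℂ] H} (hx : x ∈ basicConstruction M P ξ)
    (hxP : x ∈ P.commutant) {m : ℕ} (hm : m ≠ 0) : x ξ ∈ (subsp P ξ (u m))ᗮ := by
  obtain ⟨hu0, hun, horth, -⟩ := hu
  obtain ⟨hum, hun⟩ := hun m
  set f := u m * jonesProj P ξ * star (u m)
  obtain ⟨a, haP, ha⟩ := exists_jonesProj_mul_mul_jonesProj_eq htr hcyc hPM hcyc'
    (mul_mem (star_mem (mem_basicConstruction_of_mem hum)) hx)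
  set b := u m * a
  have hbp : ∀ p ∈ P, (b * p) ξ = f (x (p ξ)) := fun p hp => by
    have := congrArg (fun B : H →L[ℂ] H => u m (B (p ξ))) ha
    simp only [mul_apply_eq_comp, jonesProj_apply_apply hp] at this
    exact this.symm
  have hbξ : b ξ = f (x ξ) := by simpa using hbp 1 (one_mem P)
  have hbP : b ∈ P := by
    refine hrc b (mul_mem hum (hPM haP)) fun p hp => VonNeumannAlgebra.eq_of_apply_eq hcyc'
      (mul_mem (mul_mem hum (hPM haP)) (hPM hp)) (mul_mem (hPM hp) (mul_mem hum (hPM haP))) ?_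
    rw [hbp p hp, VonNeumannAlgebra.apply_apply_of_mem_commutant hxP hp]
    change f (p (x ξ)) = p (b ξ)
    rw [hbξ, ← mul_apply_eq_comp, ← (hun.commute_conj_jonesProj hp).eq]
    rfl
  refine mem_orthogonal_subsp_iff.2 fun p hp => ?_
  rw [← conj_jonesProj_apply_mul_apply hun.1 hp, ← inner_star_apply,
    (isStarProjection_jonesProj.isSelfAdjoint.conjugate (u m)).star_eq, ← hbξ]
  refine horth m 0 hm _ (Submodule.le_topologicalClosure _ (Submodule.subset_span ⟨p, hp, rfl⟩))
    _ ?_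
  rw [hu0, subsp_one]
  exact apply_mem_jonesSubspace hbP

theorem apply_mem_jonesSubspace_of_mem_basicConstruction {x : H →L[ℂ] H}
    (hx : x ∈ basicConstruction M P ξ) (hxP : x ∈ P.commutant) :
    x ξ ∈ jonesSubspace P ξ := by
  set z := x ξ - jonesProj P ξ (x ξ)
  have hz : ∀ n, z ∈ (subsp P ξ (u n))ᗮ := by
    intro n
    rcases eq_or_ne n 0 with rfl | hn
    · rw [hu.1, subsp_one]
      exact Submodule.sub_starProjection_mem_orthogonal _
    · refine sub_mem (apply_mem_orthogonal_subsp htr hcyc hcyc' hPM hrc hu hx hxP hn) ?_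
      refine fun v hv => hu.2.2.1 n 0 hn v hv _ ?_
      rw [hu.1, subsp_one]
      exact jonesProj_apply_mem _
  have hz' : z ∈ (⨆ n, subsp P ξ (u n))ᗮ := by
    rw [← Submodule.iInf_orthogonal, Submodule.mem_iInf]
    exact hz
  have hz0 : z = 0 := hu.2.2.2.eq_zero_of_inner_right ℂ hz'
  rw [sub_eq_zero.1 hz0]
  exact jonesProj_apply_mem _

theorem commute_jonesProj_of_mem_basicConstruction {x : H →L[ℂ] H}
    (hx : x ∈ basicConstruction M P ξ) (hxP : x ∈ P.commutant) :
    Commute x (jonesProj P ξ) :=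
  commute_jonesProj_of_mem_commutant hxP
    (apply_mem_jonesSubspace_of_mem_basicConstruction htr hcyc hcyc' hPM hrc hu hx hxP)
    (apply_mem_jonesSubspace_of_mem_basicConstruction htr hcyc hcyc' hPM hrc hu (star_mem hx)
      (star_mem hxP))

theorem conj_jonesProj_eq_of_norm_sub_one_lt {w : H →L[ℂ] H} (hw : IsNormalizer P w)
    (hwA : w ∈ basicConstruction M P ξ) (hw1 : ‖w - 1‖ < 1) :
    w * jonesProj P ξ * star w = jonesProj P ξ :=
  isStarProjection_jonesProj.conj_eq_self_of_commute hw.1 hw1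
    (commute_jonesProj_of_mem_basicConstruction htr hcyc hcyc' hPM hrc hu
      (mul_mem (mul_mem hwA jonesProj_mem_basicConstruction) (star_mem hwA))
      (VonNeumannAlgebra.mem_commutant_iff.2 fun _ hp => (hw.commute_conj_jonesProj hp).eq))

theorem subsp_eq_of_norm_sub_lt_one {v w : H →L[ℂ] H} (hv : IsNormalizer P v)
    (hvA : v ∈ basicConstruction M P ξ) (hw : IsNormalizer P w)
    (hwA : w ∈ basicConstruction M P ξ) (hvw : ‖w - v‖ < 1) : subsp P ξ v = subsp P ξ w := by
  have hconj := conj_jonesProj_eq_of_norm_sub_one_lt htr hcyc hcyc' hPM hrc hu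
    (hw.star.mul hv) (mul_mem (star_mem hwA) hvA) <| by
      rwa [← Unitary.star_mul_self_of_mem hw.1, ← mul_sub, CStarRing.norm_mem_unitary_mul _
        (Unitary.star_mem hw.1), norm_sub_rev]
  refine subsp_eq_of_conj_jonesProj_eq hv.1 hw.1 ?_
  calc v * jonesProj P ξ * star v
      = w * (star w * v * jonesProj P ξ * star (star w * v)) * star w := by
        simp only [star_mul, star_star, ← mul_assoc, Unitary.mul_star_self_of_mem hw.1, one_mul]
        simp only [mul_assoc, Unitary.mul_star_self_of_mem hw.1, mul_one]
    _ = w * jonesProj P ξ * star w := by rw [hconj]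

end OrthonormalBasis

namespace IsTracialVector

variable {N : VonNeumannAlgebra H} {ξ : H} (htr : IsTracialVector N ξ)
  {W : StarSubalgebra ℂ (H →L[ℂ] H)} (hWN : W ≤ N.toStarSubalgebra)
  (hW : Dense {z : H | ∃ w ∈ W, w ξ = z}) {y : H →L[ℂ] H} (hy : ∀ w ∈ W, Commute y w)
include htr hWN hW hy

/-- Approximating `y⋆ ξ` by `w_k ξ` with `w_k ∈ W`, the vectors `w_k⋆ ξ` converge to `y ξ`, and
traciality moves `w_k` across `h`. -/
theorem apply_apply_eq_of_commute {h : H →L[ℂ] H} (hh : h ∈ N) : y (h ξ) = h (y ξ) := by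
  have hy' : ∀ w ∈ W, star y (w ξ) = w (star y ξ) := fun w hw => by
    simpa only [star_star, mul_apply_eq_comp] using
      congrArg (fun B : H →L[ℂ] H => B ξ) (hy _ (star_mem hw)).star_star.eq
  have hyξ : star y ξ ∈ closure {z : H | ∃ w ∈ W, w ξ = z} := hW.closure_eq ▸ Set.mem_univ _
  obtain ⟨z, hz, hlim⟩ := mem_closure_iff_seq_limit.1 hyξ
  choose w hwW hwz using hz
  have hη : Tendsto (fun k => w k ξ) atTop (𝓝 (star y ξ)) := by simpa only [hwz] using hlim
  obtain ⟨β, hβ⟩ := htr.exists_tendsto_star_apply (fun k => hWN (hwW k)) hη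
  have key : ∀ a ∈ N, ∀ v ∈ W, ⟪a ξ, v (star y ξ)⟫_ℂ = ⟪a β, v ξ⟫_ℂ := fun a ha v hv =>
    htr.inner_apply_eq_of_tendsto (fun k => hWN (hwW k)) hη hβ ha (hWN hv)
  have hβy : β = y ξ := by
    refine hW.eq_of_inner_left ℂ ?_
    rintro _ ⟨v, hv, rfl⟩
    calc ⟪β, v ξ⟫_ℂ = ⟪ξ, v (star y ξ)⟫_ℂ := by simpa using (key 1 (one_mem N) v hv).symm
      _ = ⟪y ξ, v ξ⟫_ℂ := by rw [← hy' v hv, inner_star_apply]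
  refine hW.eq_of_inner_left ℂ ?_
  rintro _ ⟨v, hv, rfl⟩
  calc ⟪y (h ξ), v ξ⟫_ℂ = ⟪h ξ, v (star y ξ)⟫_ℂ := by rw [← hy' v hv, inner_star_apply]
    _ = ⟪h (y ξ), v ξ⟫_ℂ := by rw [key h hh v hv, hβy]

theorem commute_of_commute_of_dense {g : H →L[ℂ] H} (hg : g ∈ N) : Commute y g := by
  refine ContinuousLinearMap.ext_on (hW.mono Submodule.subset_span) ?_
  rintro _ ⟨w, hw, rfl⟩
  change y ((g * w) ξ) = g (y (w ξ))
  rw [htr.apply_apply_eq_of_commute hWN hW hy (mul_mem hg (hWN hw)), ← mul_apply_eq_comp y,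
    (hy w hw).eq]
  rfl

end IsTracialVector

theorem Commute.star_left_of_mem_unitary {R : Type*} [Monoid R] [StarMul R] {v y : R}
    (hv : v ∈ unitary R) (h : Commute v y) : Commute (star v) y :=
  calc star v * y = star v * (y * v) * star v := by
        simp only [mul_assoc, Unitary.mul_star_self_of_mem hv, mul_one]
    _ = y * star v := by rw [← h.eq, ← mul_assoc, Unitary.star_mul_self_of_mem hv, one_mul]

theorem centralizer_centralizer_union_range_eq {N P : VonNeumannAlgebra H} {ξ : H}
    (htr : IsTracialVector N ξ) (hPN : P ≤ N) {v : ℕ → H →L[ℂ] H}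
    (hv : ∀ n, v n ∈ N ∧ IsNormalizer P (v n)) (hd : Dense (↑(⨆ n, subsp P ξ (v n)) : Set H)) :
    Set.centralizer (Set.centralizer ((P : Set (H →L[ℂ] H)) ∪ Set.range v)) = N := by
  set S := (P : Set (H →L[ℂ] H)) ∪ Set.range v
  set W := StarAlgebra.adjoin ℂ S
  have hWN : W ≤ N.toStarSubalgebra :=
    StarAlgebra.adjoin_le (Set.union_subset hPN (Set.range_subset_iff.2 fun n => (hv n).1))
  have hW : Dense {z : H | ∃ w ∈ W, w ξ = z} := by
    let Wξ := (Subalgebra.toSubmodule W.toSubalgebra).map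
      (ContinuousLinearMap.apply ℂ H ξ : (H →L[ℂ] H) →ₗ[ℂ] H)
    have hle : (⨆ n, subsp P ξ (v n)) ≤ Wξ.topologicalClosure := by
      refine iSup_le fun n => Submodule.topologicalClosure_minimal _ ?_
        (Submodule.isClosed_topologicalClosure _)
      rw [Submodule.span_le]
      rintro _ ⟨p, hp, rfl⟩
      have hvp : v n * p ∈ W := mul_mem (StarAlgebra.subset_adjoin ℂ S (Or.inr ⟨n, rfl⟩))
        (StarAlgebra.subset_adjoin ℂ S (Or.inl hp))
      exact Submodule.le_topologicalClosure _ ⟨v n * p, hvp, rfl⟩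
    have hcl : (Wξ.topologicalClosure : Set H) = closure {z : H | ∃ w ∈ W, w ξ = z} :=
      Submodule.topologicalClosure_coe _
    rw [← dense_closure, ← hcl]
    exact hd.mono hle
  refine subset_antisymm ?_ fun g hg y hy => ?_
  · exact (Set.centralizer_subset (Set.centralizer_subset (Set.union_subset hPN
      (Set.range_subset_iff.2 fun n => (hv n).1)))).trans N.centralizer_centralizer'.subset
  · have hyS : y ∈ StarSubalgebra.centralizer ℂ S := by
      refine (StarSubalgebra.mem_centralizer_iff ℂ).2 fun s hs => ⟨hy s hs, ?_⟩
      rcases hs with hs | ⟨n, rfl⟩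
      · exact hy _ (Or.inl (star_mem hs))
      · exact (Commute.star_left_of_mem_unitary (hv n).2.1 (hy _ (Or.inr ⟨n, rfl⟩))).eq
    have hyW : ∀ w ∈ W, Commute y w := fun w hw =>
      ((StarSubalgebra.mem_centralizer_iff ℂ).1
        (StarAlgebra.adjoin_le_centralizer_centralizer ℂ S hw) y hyS).1
    exact (htr.commute_of_commute_of_dense hWN hW hyW hg).eq

theorem stmt_16_general (M N P : VonNeumannAlgebra H)
    (hPM : ∀ x, x ∈ P → x ∈ M) (hPN : ∀ x, x ∈ P → x ∈ N)
    (hrc : ∀ x ∈ M, (∀ p ∈ P, x * p = p * x) → x ∈ P)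
    (ξ : H)
    (htrM : ∀ x ∈ M, ∀ y ∈ M, (inner ℂ ((x * y) ξ) ξ : ℂ) = (inner ℂ ((y * x) ξ) ξ : ℂ))
    (htrN : ∀ x ∈ N, ∀ y ∈ N, (inner ℂ ((x * y) ξ) ξ : ℂ) = (inner ℂ ((y * x) ξ) ξ : ℂ))
    (hcyc : Dense {y : H | ∃ x ∈ M, x ξ = y})
    (hcyc' : Dense {y : H | ∃ x ∈ M.commutant, x ξ = y})
    (hBC : Set.centralizer (Set.centralizer
        ((M : Set (H →L[ℂ] H)) ∪ {projCl {y : H | ∃ p ∈ P, p ξ = y}})) =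
      Set.centralizer (Set.centralizer
        ((N : Set (H →L[ℂ] H)) ∪ {projCl {y : H | ∃ p ∈ P, p ξ = y}})))
    (u : ℕ → (H →L[ℂ] H)) (hu : IsBHONB M P ξ u)
    (v : ℕ → (H →L[ℂ] H)) (hv0 : v 0 = 1)
    (hvN : ∀ n, v n ∈ N ∧ IsNormalizer P (v n))
    (hclose : ∀ n, ‖v n - u n‖ < 1) :
    (∀ n, subsp P ξ (u n) = subsp P ξ (v n)) ∧
      IsBHONB N P ξ v ∧
      Set.centralizer (Set.centralizer
        ((P : Set (H →L[ℂ] H)) ∪ Set.range v)) = (N : Set (H →L[ℂ] H)) := by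
  have hA : basicConstruction M P ξ = basicConstruction N P ξ :=
    SetLike.coe_injective (by rw [coe_basicConstruction, coe_basicConstruction, hBC])
  have hsub : ∀ n, subsp P ξ (u n) = subsp P ξ (v n) := fun n =>
    subsp_eq_of_norm_sub_lt_one htrM hcyc hcyc' hPM hrc hu (hu.2.1 n).2
      (mem_basicConstruction_of_mem (hu.2.1 n).1) (hvN n).2
      (hA ▸ mem_basicConstruction_of_mem (hvN n).1) (hclose n)
  have hv : IsBHONB N P ξ v :=
    ⟨hv0, hvN, by simpa only [hsub] using hu.2.2.1, by simpa only [hsub] using hu.2.2.2⟩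
  exact ⟨hsub, hv, centralizer_centralizer_union_range_eq htrN hPN hvN hv.2.2.2⟩

/-- transfer of bounded homogeneous orthonormal bases of normalizers from
`M` to a II₁ factor `N` with the same basic construction. -/
theorem stmt_16 (M N P : VonNeumannAlgebra H) (τM τN : (H →L[ℂ] H) →ₗ[ℂ] ℂ)
    (hM : IsIIOneFactor M τM) (hN : IsIIOneFactor N τN)
    (hPM : ∀ x, x ∈ P → x ∈ M) (hPN : ∀ x, x ∈ P → x ∈ N)
    (hrc : ∀ x ∈ M, (∀ p ∈ P, x * p = p * x) → x ∈ P)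
    (ξ : H)
    (htrM : ∀ x ∈ M, ∀ y ∈ M, (inner ℂ ((x * y) ξ) ξ : ℂ) = (inner ℂ ((y * x) ξ) ξ : ℂ))
    (htrN : ∀ x ∈ N, ∀ y ∈ N, (inner ℂ ((x * y) ξ) ξ : ℂ) = (inner ℂ ((y * x) ξ) ξ : ℂ))
    (hcyc : Dense {y : H | ∃ x ∈ M, x ξ = y})
    (hcyc' : Dense {y : H | ∃ x ∈ M.commutant, x ξ = y})
    (hBC : Set.centralizer (Set.centralizer
        ((M : Set (H →L[ℂ] H)) ∪ {projCl {y : H | ∃ p ∈ P, p ξ = y}})) =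
      Set.centralizer (Set.centralizer
        ((N : Set (H →L[ℂ] H)) ∪ {projCl {y : H | ∃ p ∈ P, p ξ = y}})))
    (u : ℕ → (H →L[ℂ] H)) (hu : IsBHONB M P ξ u)
    (v : ℕ → (H →L[ℂ] H)) (hv0 : v 0 = 1)
    (hvN : ∀ n, v n ∈ N ∧ IsNormalizer P (v n))
    (hclose : ∀ n, ‖v n - u n‖ < 1) :
    (∀ n, subsp P ξ (u n) = subsp P ξ (v n)) ∧
      IsBHONB N P ξ v ∧
      Set.centralizer (Set.centralizer
        ((P : Set (H →L[ℂ] H)) ∪ Set.range v)) = (N : Set (H →L[ℂ] H)) :=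
  stmt_16_general M N P hPM hPN hrc ξ htrM htrN hcyc hcyc' hBC u hu v hv0 hvN hclose
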